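/- Let q be a natural number, Q an integer, P a positive integer, and a an integer with 1 ≤ a < q and gcd(a,q) = 1. Then ∑_{n=1}^{q} |∑_{x=Q+1}^{Q+P} e(n·a·x/q)| ≤ P + q·log q, where e(t) = exp(2πit). -/

import Mathlib

/-!
For each `n` the inner sum is a geometric progression with ratio `ζ = e(na/q)`, so it is at most
`P` when `q ∣ na` and at most `2 / |ζ - 1|` otherwise. Since `a` is a unit mod `q`, the ratios run
through all `q`-th roots of unity once, and the chord bound `|e(m/q) - 1| ≥ 4 min(m, q - m) / q`
(Jordan's inequality) reduces the nontrivial terms to `q / 2 · ∑ 1 / min(m, q - m)`. That sum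
consists of two harmonic sums `H_r + H_s` with `r + s + 1 = q`, and `H_r ≤ log (2r + 1)` together
with `(2r + 1)(2s + 1) ≤ q²` gives `q log q`.
-/

/-- `e(t) = exp(2πit)`. -/
noncomputable def eC (t : ℝ) : ℂ := Complex.exp (2 * Real.pi * Complex.I * t)

open Finset Real

section GeomSum

variable {K : Type*} [NormedDivisionRing K]

theorem sum_zpow_Icc_eq_mul_geom_sum {ζ : K} (hζ : ζ ≠ 0) (Q : ℤ) (P : ℕ) :
    ∑ x ∈ Icc (Q + 1) (Q + P), ζ ^ x = ζ ^ (Q + 1) * ∑ i ∈ range P, ζ ^ i := by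
  rw [mul_sum]
  refine sum_nbij' (fun x => (x - (Q + 1)).toNat) (fun i => Q + 1 + i) ?_ ?_ ?_ ?_ ?_ <;>
    intro x hx <;> simp only [mem_Icc, mem_range] at hx ⊢ <;> try omega
  rw [← zpow_natCast, ← zpow_add₀ hζ]
  congr 1
  omega

theorem norm_sum_zpow_Icc_le {ζ : K} (hζ : ‖ζ‖ = 1) (h1 : ζ ≠ 1) (Q : ℤ) (P : ℕ) :
    ‖∑ x ∈ Icc (Q + 1) (Q + P), ζ ^ x‖ ≤ 2 / ‖ζ - 1‖ := by
  have hζ0 : ζ ≠ 0 := norm_ne_zero_iff.mp (by rw [hζ]; exact one_ne_zero)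
  rw [sum_zpow_Icc_eq_mul_geom_sum hζ0, geom_sum_eq h1, norm_mul, norm_zpow, hζ, one_zpow,
    one_mul, norm_div]
  gcongr
  calc ‖ζ ^ P - 1‖ ≤ ‖ζ ^ P‖ + ‖(1 : K)‖ := norm_sub_le _ _
    _ = 2 := by rw [norm_pow, hζ, one_pow, norm_one]; norm_num

end GeomSum

theorem four_mul_abs_le_norm_exp_sub_one {t : ℝ} (ht : |t| ≤ 1 / 2) :
    4 * |t| ≤ ‖Complex.exp (2 * π * Complex.I * t) - 1‖ := by
  have hπt : |π * t| ≤ π / 2 := by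
    rw [abs_mul, abs_of_pos pi_pos]
    nlinarith [pi_pos]
  have jordan := mul_le_sin (abs_nonneg _) hπt
  rw [← abs_sin_eq_sin_abs_of_abs_le_pi (hπt.trans (by linarith [pi_pos])), abs_mul,
    abs_of_pos pi_pos] at jordan
  calc 4 * |t| = 2 * (2 / π * (π * |t|)) := by field_simp; ring
    _ ≤ 2 * |sin (π * t)| := by gcongr
    _ = ‖Complex.exp (2 * π * Complex.I * t) - 1‖ := by
      rw [show 2 * π * Complex.I * t = Complex.I * ((2 * π * t : ℝ) : ℂ) by push_cast; ring,
        Complex.norm_exp_I_mul_ofReal_sub_one, norm_mul, Real.norm_eq_abs, Real.norm_eq_abs,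
        show 2 * π * t / 2 = π * t by ring]
      norm_num

section Harmonic

theorem inv_add_one_le_log_sub_log (n : ℕ) :
    ((n : ℝ) + 1)⁻¹ ≤ log (2 * (n + 1) + 1) - log (2 * n + 1) := by
  -- the first term of the series of `log (1 + 1 / (n + 1/2))`
  have h := le_hasSum (hasSum_log_one_add_inv (a := (n : ℝ) + 1 / 2) (by positivity)) 0
    (fun _ _ => by positivity)
  have hfirst : (2 : ℝ) * (1 / (2 * ((0 : ℕ) : ℝ) + 1)) * (1 / (2 * (n + 1 / 2) + 1)) ^ (2 * 0 + 1)
      = ((n : ℝ) + 1)⁻¹ := by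
    rw [show (2 : ℝ) * (n + 1 / 2) + 1 = 2 * (n + 1) by ring]
    norm_num
    ring
  have hlog : 1 + ((n : ℝ) + 1 / 2)⁻¹ = (2 * (n + 1) + 1) / (2 * n + 1) := by
    field_simp
    ring
  rwa [hfirst, hlog, log_div (by positivity) (by positivity)] at h

theorem harmonic_le_log_two_mul_add_one (n : ℕ) : (harmonic n : ℝ) ≤ log (2 * n + 1) := by
  induction n with
  | zero => simp
  | succ n ih =>
    rw [harmonic_succ]
    push_cast
    linarith [inv_add_one_le_log_sub_log n]

theorem harmonic_add_harmonic_le_two_mul_log (r s : ℕ) :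
    (harmonic r + harmonic s : ℝ) ≤ 2 * log (r + s + 1) := by
  have hprod : ((2 * r + 1) * (2 * s + 1) : ℝ) ≤ (r + s + 1) ^ 2 := by
    nlinarith [sq_nonneg ((r : ℝ) - s)]
  calc (harmonic r + harmonic s : ℝ) ≤ log (2 * r + 1) + log (2 * s + 1) :=
        add_le_add (harmonic_le_log_two_mul_add_one r) (harmonic_le_log_two_mul_add_one s)
    _ = log ((2 * r + 1) * (2 * s + 1)) := (log_mul (by positivity) (by positivity)).symm
    _ ≤ log ((r + s + 1) ^ 2) := log_le_log (by positivity) hprod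
    _ = 2 * log (r + s + 1) := by rw [log_pow]; norm_num

/-- The term `m = 0` is `0⁻¹ = 0`. -/
theorem sum_range_inv_min_sub_eq (q : ℕ) :
    ∑ m ∈ range q, ((min m (q - m) : ℕ) : ℝ)⁻¹ = harmonic (q / 2) + harmonic ((q - 1) / 2) := by
  rcases Nat.eq_zero_or_pos q with rfl | hq
  · simp
  rw [← sum_range_add_sum_Ico _ (by omega : q / 2 + 1 ≤ q), harmonic_eq_sum_Icc,
    harmonic_eq_sum_Icc, Rat.cast_sum, Rat.cast_sum]
  simp only [Rat.cast_inv, Rat.cast_natCast]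
  congr 1
  · rw [range_eq_Ico, sum_eq_sum_Ico_succ_bot (by omega), ← Ico_add_one_right_eq_Icc]
    simp only [Nat.zero_min, Nat.cast_zero, inv_zero, zero_add]
    refine sum_congr rfl fun m hm => ?_
    rw [mem_Ico] at hm
    rw [min_eq_left (by omega)]
  · rw [← show Ico (q + 1 - q) (q + 1 - (q / 2 + 1)) = Icc 1 ((q - 1) / 2) by ext; simp; omega,
      ← sum_Ico_reflect (fun j : ℕ => (j : ℝ)⁻¹) (q / 2 + 1) (Nat.le_succ q)]
    refine sum_congr rfl fun m hm => ?_
    rw [mem_Ico] at hm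
    rw [min_eq_right (by omega)]

theorem sum_range_inv_min_sub_le_two_mul_log (q : ℕ) :
    ∑ m ∈ range q, ((min m (q - m) : ℕ) : ℝ)⁻¹ ≤ 2 * log q := by
  rcases Nat.eq_zero_or_pos q with rfl | hq
  · simp
  rw [sum_range_inv_min_sub_eq]
  convert harmonic_add_harmonic_le_two_mul_log (q / 2) ((q - 1) / 2) using 3
  exact_mod_cast (by omega : q = q / 2 + (q - 1) / 2 + 1)

end Harmonic

namespace ZMod

variable {q : ℕ} [NeZero q]

section Reindex

variable {M : Type*} [AddCommMonoid M]

theorem sum_val_eq_sum_range (f : ℕ → M) : ∑ z : ZMod q, f z.val = ∑ m ∈ range q, f m := by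
  obtain ⟨k, rfl⟩ := Nat.exists_eq_succ_of_ne_zero (NeZero.ne q)
  exact Fin.sum_univ_eq_sum_range f (k + 1)

theorem sum_range_natCast (f : ZMod q → M) : ∑ m ∈ range q, f m = ∑ z, f z := by
  simp_rw [← sum_val_eq_sum_range, natCast_zmod_val]

theorem sum_Icc_one_natCast (f : ZMod q → M) : ∑ n ∈ Icc 1 q, f n = ∑ z, f z := by
  rw [← Ico_add_one_right_eq_Icc, ← zero_add 1, ← sum_Ico_add' (fun n : ℕ => f n),
    ← range_eq_Ico]
  push_cast
  rw [sum_range_natCast (fun z => f (z + 1))]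
  exact Equiv.sum_comp (Equiv.addRight 1) f

end Reindex

theorem four_mul_min_val_div_le_norm_stdAddChar_sub_one (z : ZMod q) :
    4 * (min z.val (q - z.val) : ℕ) / q ≤ ‖stdAddChar z - 1‖ := by
  have hq : (0 : ℝ) < q := by exact_mod_cast NeZero.pos q
  have hv : -(q : ℝ) < z.valMinAbs * 2 ∧ z.valMinAbs * 2 ≤ (q : ℝ) := by
    exact_mod_cast z.valMinAbs_mem_Ioc
  have ht : |(z.valMinAbs : ℝ) / q| ≤ 1 / 2 := by
    rw [abs_le, le_div_iff₀ hq, div_le_iff₀ hq]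
    constructor <;> linarith
  have hz : stdAddChar z = Complex.exp (2 * π * Complex.I * ((z.valMinAbs / q : ℝ) : ℂ)) := by
    conv_lhs => rw [← coe_valMinAbs z, stdAddChar_coe]
    push_cast
    ring_nf
  rw [← valMinAbs_natAbs_eq_min, Nat.cast_natAbs, Int.cast_abs, mul_div_assoc, hz,
    show |(z.valMinAbs : ℝ)| / q = |(z.valMinAbs : ℝ) / q| by rw [abs_div, abs_of_pos hq]]
  exact four_mul_abs_le_norm_exp_sub_one ht

theorem norm_sum_stdAddChar_mul_Icc_le_card (z : ZMod q) (Q : ℤ) (P : ℕ) :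
    ‖∑ x ∈ Icc (Q + 1) (Q + P), stdAddChar (z * (x : ZMod q))‖ ≤ P := by
  refine (norm_sum_le _ _).trans ?_
  simp [stdAddChar_apply, Circle.norm_coe]

theorem norm_sum_stdAddChar_mul_Icc_le {z : ZMod q} (hz : z ≠ 0) (Q : ℤ) (P : ℕ) :
    ‖∑ x ∈ Icc (Q + 1) (Q + P), stdAddChar (z * (x : ZMod q))‖ ≤
      q / (2 * (min z.val (q - z.val) : ℕ)) := by
  have hmin : (0 : ℝ) < (min z.val (q - z.val) : ℕ) := by
    have := z.val_lt
    have := (val_ne_zero z).mpr hz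
    exact_mod_cast (by omega : 0 < min z.val (q - z.val))
  have hq : (0 : ℝ) < q := by exact_mod_cast NeZero.pos q
  have hchord := four_mul_min_val_div_le_norm_stdAddChar_sub_one z
  have hpos : (0 : ℝ) < 4 * (min z.val (q - z.val) : ℕ) / q := by positivity
  have hne : stdAddChar z ≠ 1 := fun h => by
    rw [h, sub_self, norm_zero] at hchord
    linarith
  simp_rw [mul_comm z, ← zsmul_eq_mul, AddChar.map_zsmul_eq_zpow]
  calc _ ≤ 2 / ‖stdAddChar z - 1‖ := norm_sum_zpow_Icc_le (Circle.norm_coe _) hne Q P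
    _ ≤ 2 / (4 * (min z.val (q - z.val) : ℕ) / q) := by gcongr
    _ = q / (2 * (min z.val (q - z.val) : ℕ)) := by field_simp; ring

theorem sum_norm_sum_stdAddChar_mul_Icc_le (Q : ℤ) (P : ℕ) :
    ∑ z : ZMod q, ‖∑ x ∈ Icc (Q + 1) (Q + P), stdAddChar (z * (x : ZMod q))‖ ≤
      P + q * log q := by
  rw [← add_sum_erase _ _ (mem_univ (0 : ZMod q))]
  refine add_le_add (norm_sum_stdAddChar_mul_Icc_le_card 0 Q P) ?_
  calc _ ≤ ∑ z ∈ univ.erase 0, (q : ℝ) / (2 * (min z.val (q - z.val) : ℕ)) :=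
        sum_le_sum fun z hz => norm_sum_stdAddChar_mul_Icc_le (ne_of_mem_erase hz) Q P
    _ ≤ ∑ z : ZMod q, (q : ℝ) / (2 * (min z.val (q - z.val) : ℕ)) := by
        apply sum_le_sum_of_subset_of_nonneg (erase_subset 0 univ)
        intros
        positivity
    _ = q / 2 * ∑ m ∈ range q, ((min m (q - m) : ℕ) : ℝ)⁻¹ := by
        rw [sum_val_eq_sum_range (fun m => (q : ℝ) / (2 * (min m (q - m) : ℕ))), mul_sum]
        refine sum_congr rfl fun m _ => ?_
        field_simp
    _ ≤ q / 2 * (2 * log q) := by gcongr; exact sum_range_inv_min_sub_le_two_mul_log q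
    _ = q * log q := by ring

end ZMod

theorem eC_intCast_div (q : ℕ) [NeZero q] (c : ℤ) :
    eC (c / q) = ZMod.stdAddChar (c : ZMod q) := by
  rw [eC, ZMod.stdAddChar_coe]
  push_cast
  ring_nf

theorem korobov_geometric_sum_general (q : ℕ) (Q : ℤ) (P : ℕ)
    (a : ℤ) (hgcd : Int.gcd a (q : ℤ) = 1) :
    ∑ n ∈ Finset.Icc 1 q,
        ‖∑ x ∈ Finset.Icc (Q + 1) (Q + (P : ℤ)),
          eC ((((n : ℤ) * a * x : ℤ) : ℝ) / (q : ℝ))‖ ≤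
      (P : ℝ) + (q : ℝ) * Real.log q := by
  rcases Nat.eq_zero_or_pos q with rfl | hq
  · simp
  have : NeZero q := ⟨hq.ne'⟩
  have ha : IsUnit (a : ZMod q) := IsUnit.of_mul_eq_one _
    (ZMod.coe_int_mul_inv_eq_one (Int.isCoprime_iff_gcd_eq_one.mpr hgcd))
  set T : ZMod q → ℝ := fun z =>
    ‖∑ x ∈ Icc (Q + 1) (Q + P), ZMod.stdAddChar (z * (x : ZMod q))‖
  calc _ = ∑ n ∈ Icc 1 q, T (n * a) := by
        refine sum_congr rfl fun n _ => ?_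
        simp only [T, eC_intCast_div]
        push_cast
        ring_nf
    _ = ∑ z, T z := by
        rw [ZMod.sum_Icc_one_natCast (fun z => T (z * (a : ZMod q)))]
        exact Equiv.sum_comp (Units.mulRight ha.unit) T
    _ ≤ _ := ZMod.sum_norm_sum_stdAddChar_mul_Icc_le Q P

/-- Korobov's lemma: for `1 ≤ a < q` with `gcd(a,q) = 1`,
`∑_{n=1}^{q} |∑_{x=Q+1}^{Q+P} e(n·a·x/q)| ≤ P + q·log q`. -/
theorem korobov_geometric_sum (q : ℕ) (Q : ℤ) (P : ℕ) (hP : 1 ≤ P)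
    (a : ℤ) (ha1 : 1 ≤ a) (ha2 : a < (q : ℤ)) (hgcd : Int.gcd a (q : ℤ) = 1) :
    ∑ n ∈ Finset.Icc 1 q,
        ‖∑ x ∈ Finset.Icc (Q + 1) (Q + (P : ℤ)),
          eC ((((n : ℤ) * a * x : ℤ) : ℝ) / (q : ℝ))‖ ≤
      (P : ℝ) + (q : ℝ) * Real.log q :=
  korobov_geometric_sum_general q Q P a hgcd
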